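/- Let m ≥ 2 be an integer and Δx > 0. For every real polynomial p of degree at most 2, the second-order mimetic gradient G differentiates exactly on the staggered grid: if f ∈ ℝ^(m+2) is the vector with f_1 = p(0), f_j = p((j - 3/2)Δx) for 2 ≤ j ≤ m+1, and f_{m+2} = p(mΔx), then for every 1 ≤ i ≤ m+1 the i-th entry of G·f equals p'((i-1)Δx). -/

import Mathlib

open Matrix Polynomial

/-- The second-order mimetic gradient operator on a 1D staggered grid with `m` cells
and spacing `dx`: an `(m+1) × (m+2)` matrix. -/
noncomputable def mimG (m : ℕ) (dx : ℝ) : Matrix (Fin (m+1)) (Fin (m+2)) ℝ :=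
  Matrix.of fun i j =>
    if i.val = 0 then
      if j.val = 0 then -8/(3*dx) else if j.val = 1 then 3/dx
      else if j.val = 2 then -1/(3*dx) else 0
    else if i.val = m then
      if j.val = m-1 then 1/(3*dx) else if j.val = m then -3/dx
      else if j.val = m+1 then 8/(3*dx) else 0
    else
      if j.val = i.val then -1/dx else if j.val = i.val + 1 then 1/dx else 0

/-- The second-order mimetic divergence operator on a 1D staggered grid with `m` cells
and spacing `dx`: an `(m+2) × (m+1)` matrix with zero first and last rows. -/
noncomputable def mimD (m : ℕ) (dx : ℝ) : Matrix (Fin (m+2)) (Fin (m+1)) ℝ :=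
  Matrix.of fun j i =>
    if j.val = 0 ∨ j.val = m+1 then 0
    else if i.val = j.val - 1 then -1/dx
    else if i.val = j.val then 1/dx else 0

lemma sum_two_aux {n : ℕ} (g : Fin n → ℝ) (a b : Fin n) (hab : a ≠ b)
    (h : ∀ j, j ≠ a → j ≠ b → g j = 0) : ∑ j, g j = g a + g b := by
  have : ∑ j, g j = ∑ j ∈ ({a, b} : Finset (Fin n)), g j := by
    refine (Finset.sum_subset (Finset.subset_univ _) ?_).symm
    intro x _ hx
    simp only [Finset.mem_insert, Finset.mem_singleton, not_or] at hx
    exact h x hx.1 hx.2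
  rw [this, Finset.sum_pair hab]

lemma sum_three_aux {n : ℕ} (g : Fin n → ℝ) (a b c : Fin n)
    (hab : a ≠ b) (hac : a ≠ c) (hbc : b ≠ c)
    (h : ∀ j, j ≠ a → j ≠ b → j ≠ c → g j = 0) :
    ∑ j, g j = g a + g b + g c := by
  have : ∑ j, g j = ∑ j ∈ ({a, b, c} : Finset (Fin n)), g j := by
    refine (Finset.sum_subset (Finset.subset_univ _) ?_).symm
    intro x _ hx
    simp only [Finset.mem_insert, Finset.mem_singleton, not_or] at hx
    exact h x hx.1 hx.2.1 hx.2.2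
  rw [this]
  rw [Finset.sum_insert (by simp [hab, hac]), Finset.sum_pair hbc]
  ring

/-- The second-order mimetic gradient differentiates polynomials of degree ≤ 2
exactly on the staggered grid: boundary node `0`, cell centers `(j - 1/2)·Δx`
(0-based interior index `j`), boundary node `m·Δx`;  the `i`-th output equals
`p'` at the node `i·Δx` (0-based). -/
theorem mimetic_grad_exact_quadratics (m : ℕ) (hm : 2 ≤ m) (dx : ℝ) (hdx : 0 < dx)
    (p : Polynomial ℝ) (hp : p.degree ≤ 2)
    (f : Fin (m+2) → ℝ)
    (hf0 : f 0 = p.eval 0)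
    (hfi : ∀ j : Fin (m+2), 1 ≤ j.val → j.val ≤ m →
      f j = p.eval (((j.val : ℝ) - 1/2) * dx))
    (hfl : f (Fin.last (m+1)) = p.eval ((m : ℝ) * dx)) :
    ∀ i : Fin (m+1),
      (mimG m dx *ᵥ f) i = (Polynomial.derivative p).eval ((i.val : ℝ) * dx) := by
  have hdx' : dx ≠ 0 := ne_of_gt hdx
  set c0 := p.coeff 0 with hc0
  set c1 := p.coeff 1 with hc1
  set c2 := p.coeff 2 with hc2
  have hnd2 : p.natDegree ≤ 2 := Polynomial.natDegree_le_iff_degree_le.mpr hp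
  have hnd : p.natDegree < 3 := by omega
  have hev : ∀ x : ℝ, p.eval x = c0 + c1 * x + c2 * x ^ 2 := by
    intro x
    rw [Polynomial.eval_eq_sum_range' hnd, Finset.sum_range_succ, Finset.sum_range_succ,
      Finset.sum_range_one]
    ring
  have hnd' : (Polynomial.derivative p).natDegree < 2 := by
    have h1 := Polynomial.natDegree_derivative_le p
    omega
  have hdev : ∀ x : ℝ, (Polynomial.derivative p).eval x = c1 + 2 * c2 * x := by
    intro x
    rw [Polynomial.eval_eq_sum_range' hnd', Finset.sum_range_succ, Finset.sum_range_one,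
      Polynomial.coeff_derivative, Polynomial.coeff_derivative]
    push_cast
    ring
  intro i
  rw [Matrix.mulVec, dotProduct]
  rcases Nat.lt_trichotomy i.val 0 with h | hi0 | hipos
  · omega
  · -- first row
    set a : Fin (m+2) := ⟨0, by omega⟩ with ha
    set b : Fin (m+2) := ⟨1, by omega⟩ with hb
    set c : Fin (m+2) := ⟨2, by omega⟩ with hc
    rw [sum_three_aux _ a b c (Fin.ne_of_val_ne (show (0:ℕ) ≠ 1 by omega))
      (Fin.ne_of_val_ne (show (0:ℕ) ≠ 2 by omega))
      (Fin.ne_of_val_ne (show (1:ℕ) ≠ 2 by omega)) ?_]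
    · have hga : mimG m dx i a = -8/(3*dx) := by simp [mimG, hi0, ha, -Fin.val_eq_zero_iff]
      have hgb : mimG m dx i b = 3/dx := by simp [mimG, hi0, hb, -Fin.val_eq_zero_iff]
      have hgc : mimG m dx i c = -1/(3*dx) := by simp [mimG, hi0, hc, -Fin.val_eq_zero_iff]
      have hfa : f a = p.eval 0 := by
        have : a = 0 := by simp [ha, Fin.ext_iff]
        rw [this, hf0]
      have hfb : f b = p.eval ((1 - 1/2 : ℝ) * dx) := by
        have := hfi b (show (1:ℕ) ≤ 1 by omega) (show (1:ℕ) ≤ m by omega)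
        rw [this]
        norm_num [hb]
      have hfc : f c = p.eval ((2 - 1/2 : ℝ) * dx) := by
        have := hfi c (show (1:ℕ) ≤ 2 by omega) (show (2:ℕ) ≤ m by omega)
        rw [this]
        norm_num [hc]
      rw [hga, hgb, hgc, hfa, hfb, hfc, hev, hev, hev, hdev, hi0]
      push_cast
      field_simp
      ring
    · intro j hja hjb hjc
      have h1 : j.val ≠ 0 := fun h => hja (Fin.ext (by simp [ha, h]))
      have h2 : j.val ≠ 1 := fun h => hjb (Fin.ext (by simp [hb, h]))
      have h3 : j.val ≠ 2 := fun h => hjc (Fin.ext (by simp [hc, h]))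
      simp [mimG, hi0, h1, h2, h3, -Fin.val_eq_zero_iff]
  · rcases Nat.lt_or_ge i.val m with him | him
    · -- interior row
      have hine : i.val ≠ 0 := by omega
      have hinem : i.val ≠ m := by omega
      set a : Fin (m+2) := ⟨i.val, by omega⟩ with ha
      set b : Fin (m+2) := ⟨i.val + 1, by omega⟩ with hb
      rw [sum_two_aux _ a b (Fin.ne_of_val_ne (show i.val ≠ i.val + 1 by omega)) ?_]
      · have hga : mimG m dx i a = -1/dx := by simp [mimG, hine, hinem, ha, -Fin.val_eq_zero_iff]
        have hgb : mimG m dx i b = 1/dx := by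
          simp [mimG, hine, hinem, hb, -Fin.val_eq_zero_iff]
        have hfa : f a = p.eval (((i.val : ℝ) - 1/2) * dx) := by
          have := hfi a (show 1 ≤ i.val by omega) (show i.val ≤ m by omega)
          rw [this]
        have hfb : f b = p.eval (((i.val : ℝ) + 1 - 1/2) * dx) := by
          have := hfi b (show 1 ≤ i.val + 1 by omega) (show i.val + 1 ≤ m by omega)
          rw [this]
          norm_num [hb]
        rw [hga, hgb, hfa, hfb, hev, hev, hdev]
        field_simp
        ring
      · intro j hja hjb
        have h1 : j.val ≠ i.val := fun h => hja (Fin.ext (by simp [ha, h]))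
        have h2 : j.val ≠ i.val + 1 := fun h => hjb (Fin.ext (by simp [hb, h]))
        simp [mimG, hine, hinem, h1, h2, -Fin.val_eq_zero_iff]
    · -- last row
      have hi : i.val = m := by omega
      have hm0 : ¬ (m = 0) := by omega
      have hne1 : ¬ (m = m - 1) := by omega
      have hne2 : ¬ (m + 1 = m - 1) := by omega
      have hne3 : ¬ (m + 1 = m) := by omega
      set a : Fin (m+2) := ⟨m - 1, by omega⟩ with ha
      set b : Fin (m+2) := ⟨m, by omega⟩ with hb
      set c : Fin (m+2) := ⟨m + 1, by omega⟩ with hc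
      rw [sum_three_aux _ a b c (Fin.ne_of_val_ne (show m - 1 ≠ m by omega))
        (Fin.ne_of_val_ne (show m - 1 ≠ m + 1 by omega))
        (Fin.ne_of_val_ne (show m ≠ m + 1 by omega)) ?_]
      · have hga : mimG m dx i a = 1/(3*dx) := by simp [mimG, hi, hm0, ha, -Fin.val_eq_zero_iff]
        have hgb : mimG m dx i b = -3/dx := by simp [mimG, hi, hm0, hne1, hb, -Fin.val_eq_zero_iff]
        have hgc : mimG m dx i c = 8/(3*dx) := by simp [mimG, hi, hm0, hne2, hne3, hc, -Fin.val_eq_zero_iff]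
        have hfa : f a = p.eval (((m : ℝ) - 1 - 1/2) * dx) := by
          have := hfi a (show 1 ≤ m - 1 by omega) (show m - 1 ≤ m by omega)
          rw [this]
          have hav : ((a.val : ℝ)) = (m : ℝ) - 1 := by
            rw [ha]
            push_cast [Nat.cast_sub (show 1 ≤ m by omega)]
            ring
          rw [hav]
        have hfb : f b = p.eval (((m : ℝ) - 1/2) * dx) := by
          have := hfi b (show 1 ≤ m by omega) (show m ≤ m by omega)
          rw [this]
        have hfc : f c = p.eval ((m : ℝ) * dx) := by
          have : c = Fin.last (m+1) := by simp [hc, Fin.ext_iff]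
          rw [this, hfl]
        rw [hga, hgb, hgc, hfa, hfb, hfc, hev, hev, hev, hdev, hi]
        field_simp
        ring
      · intro j hja hjb hjc
        have h1 : j.val ≠ m - 1 := fun h => hja (Fin.ext (by simp [ha, h]))
        have h2 : j.val ≠ m := fun h => hjb (Fin.ext (by simp [hb, h]))
        have h3 : j.val ≠ m + 1 := fun h => hjc (Fin.ext (by simp [hc, h]))
        have hine : i.val ≠ 0 := by omega
        simp [mimG, hi, hm0, h1, h2, h3, -Fin.val_eq_zero_iff]
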